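/- arXiv:2311.05598 — 6 statements merged into one kernel-verified Lean document; each statement's English description precedes it below -/
import Mathlib

section
/- Let α : Fin N → ℝ be injective, let π be the unique permutation sorting α (so α ∘ π is strictly increasing), and define the sortlet Ψ(α) = sign(π) · ∏_{i=0}^{N−2} (α(π(i+1)) − α(π(i))). Then for any permutation ρ of Fin N, Ψ(α ∘ ρ) = sign(ρ) · Ψ(α). -/
/-- The sortlet `Ψ(α) = sign(π) ∏ (α(π(i+1)) − α(π(i)))` (with `π` the sorting
permutation of `α`) is antisymmetric: precomposing `α` with a permutation `ρ`
multiplies it by `sign ρ`. -/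
theorem sortlet_antisymmetric {N : ℕ} (α : Fin (N + 1) → ℝ)
    (hα : Function.Injective α) (ρ : Equiv.Perm (Fin (N + 1)))
    (π π' : Equiv.Perm (Fin (N + 1)))
    (hπ : StrictMono (α ∘ π)) (hπ' : StrictMono ((α ∘ ρ) ∘ π')) :
    ((Equiv.Perm.sign π' : ℤ) : ℝ) *
        ∏ i : Fin N, ((α ∘ ρ) (π' i.succ) - (α ∘ ρ) (π' i.castSucc)) =
      ((Equiv.Perm.sign ρ : ℤ) : ℝ) *
        (((Equiv.Perm.sign π : ℤ) : ℝ) *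
          ∏ i : Fin N, (α (π i.succ) - α (π i.castSucc))) := by
  -- The sorted set
  set s : Finset ℝ := Finset.univ.image α with hs
  have hcard : s.card = N + 1 := by
    rw [hs, Finset.card_image_of_injective _ hα, Finset.card_univ, Fintype.card_fin]
  -- both α ∘ π and α ∘ ρ ∘ π' equal the order embedding of s
  have h1 : (α ∘ π) = s.orderEmbOfFin hcard := by
    apply Finset.orderEmbOfFin_unique hcard
    · intro x; exact Finset.mem_image_of_mem α (Finset.mem_univ _)
    · exact hπ
  have h2 : ((α ∘ ρ) ∘ π') = s.orderEmbOfFin hcard := by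
    apply Finset.orderEmbOfFin_unique hcard
    · intro x; exact Finset.mem_image_of_mem α (Finset.mem_univ _)
    · exact hπ'
  have heq : ρ * π' = π := by
    have key : ∀ i, (ρ * π') i = π i := fun i =>
      hα (by simpa using (congrFun (h2.trans h1.symm) i))
    exact Equiv.ext key
  have hsign : (Equiv.Perm.sign ρ) * (Equiv.Perm.sign π') = Equiv.Perm.sign π := by
    rw [← Equiv.Perm.sign_mul, heq]
  have hsign' : ((Equiv.Perm.sign π' : ℤ) : ℝ)
      = ((Equiv.Perm.sign ρ : ℤ) : ℝ) * ((Equiv.Perm.sign π : ℤ) : ℝ) := by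
    rw [← hsign]
    push_cast
    rcases Int.units_eq_one_or (Equiv.Perm.sign ρ) with h | h <;> rw [h] <;> push_cast <;> ring
  have hprod : ∀ i : Fin N, (α ∘ ρ) (π' i.succ) - (α ∘ ρ) (π' i.castSucc)
      = α (π i.succ) - α (π i.castSucc) := by
    intro i
    have h3 := congrFun (h2.trans h1.symm) i.succ
    have h4 := congrFun (h2.trans h1.symm) i.castSucc
    simp only [Function.comp_apply] at h3 h4 ⊢
    rw [h3, h4]
  rw [hsign']
  rw [Finset.prod_congr rfl (fun i _ => hprod i)]
  ring
end

section
/- Let φ : Fin N → (Fin N → E) → ℝ be continuous (in the configuration) and equivariant, E path-connected, and define Ψ_pair(r) = ∏_{i<j} (φ(i,r) − φ(j,r)). Let r be a configuration with Ψ_pair(r) ≠ 0 and let τ be a transposition of two indices. Then every continuous path γ : [0,1] → (Fin N → E) from r to r ∘ τ passes through a zero of Ψ_pair, i.e. there exists t ∈ (0,1) with Ψ_pair(γ(t)) = 0. -/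
open Finset

private lemma aux_prod_pairs {M : Type*} [CommMonoid M] {n : ℕ} (f : Fin n → Fin n → M) :
    ∏ p ∈ univ.filter (fun p : Fin n × Fin n => p.1 < p.2), f p.1 p.2
      = ∏ i : Fin n, ∏ j ∈ Ioi i, f i j := by
  rw [Finset.prod_sigma']
  refine Finset.prod_nbij' (fun p => ⟨p.1, p.2⟩) (fun x => (x.1, x.2)) ?_ ?_ ?_ ?_ ?_ <;>
    simp +contextual [Finset.mem_sigma, Finset.mem_filter]

private lemma swap_prod {n : ℕ} (v : Fin n → ℝ) (i j : Fin n) (hij : i ≠ j) :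
    ∏ p ∈ univ.filter (fun p : Fin n × Fin n => p.1 < p.2),
        (v (Equiv.swap i j p.1) - v (Equiv.swap i j p.2))
      = - ∏ p ∈ univ.filter (fun p : Fin n × Fin n => p.1 < p.2), (v p.1 - v p.2) := by
  have hdet : ∀ w : Fin n → ℝ,
      ∏ a : Fin n, ∏ b ∈ Ioi a, (w b - w a) = (Matrix.vandermonde w).det := by
    intro w; rw [Matrix.det_vandermonde]
  have hperm : (Matrix.vandermonde (v ∘ Equiv.swap i j)).det
      = - (Matrix.vandermonde v).det := by
    have : Matrix.vandermonde (v ∘ Equiv.swap i j)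
        = (Matrix.vandermonde v).submatrix (Equiv.swap i j) id := by
      ext a b; simp [Matrix.vandermonde, Matrix.submatrix]
    rw [this, Matrix.det_permute, Equiv.Perm.sign_swap hij]
    push_cast; ring
  have key : ∏ a : Fin n, ∏ b ∈ Ioi a, (v (Equiv.swap i j b) - v (Equiv.swap i j a))
      = - ∏ a : Fin n, ∏ b ∈ Ioi a, (v b - v a) := by
    rw [hdet, hdet v, ← hperm]; rfl
  have flip : ∀ w : Fin n → ℝ,
      ∏ a : Fin n, ∏ b ∈ Ioi a, (w a - w b)
        = (-1 : ℝ) ^ (univ.filter (fun p : Fin n × Fin n => p.1 < p.2)).card *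
          ∏ a : Fin n, ∏ b ∈ Ioi a, (w b - w a) := by
    intro w
    rw [← aux_prod_pairs (fun a b => w a - w b), ← aux_prod_pairs (fun a b => w b - w a),
      ← Finset.prod_const, ← Finset.prod_mul_distrib]
    exact Finset.prod_congr rfl (fun p _ => by ring)
  rw [aux_prod_pairs (fun a b => v (Equiv.swap i j a) - v (Equiv.swap i j b)),
    aux_prod_pairs (fun a b => v a - v b), flip, flip v,
    show (∏ a : Fin n, ∏ b ∈ Ioi a, (v (Equiv.swap i j b) - v (Equiv.swap i j a)))
      = - ∏ a : Fin n, ∏ b ∈ Ioi a, (v b - v a) from key]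
  ring

/-- Any continuous path from a configuration `r` with `Ψ_pair r ≠ 0` to its image
`r ∘ τ` under a transposition `τ` must pass through the nodal set of `Ψ_pair`. -/
theorem path_to_transposed_config_hits_node {N : ℕ} {E : Type*} [TopologicalSpace E]
    [PathConnectedSpace E]
    (φ : Fin N → (Fin N → E) → ℝ)
    (hcont : ∀ i, Continuous (φ i))
    (hequiv : ∀ (ρ : Equiv.Perm (Fin N)) (r : Fin N → E) (i : Fin N),
      φ (ρ i) (r ∘ ⇑ρ⁻¹) = φ i r)
    (Ψpair : (Fin N → E) → ℝ)
    (hΨ : ∀ r, Ψpair r = ∏ p ∈ univ.filter (fun p : Fin N × Fin N => p.1 < p.2),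
      (φ p.1 r - φ p.2 r))
    (r : Fin N → E) (hr : Ψpair r ≠ 0)
    (i j : Fin N) (hij : i ≠ j)
    (γ : ℝ → (Fin N → E)) (hγ : ContinuousOn γ (Set.Icc 0 1))
    (h0 : γ 0 = r) (h1 : γ 1 = r ∘ ⇑(Equiv.swap i j)) :
    ∃ t ∈ Set.Ioo (0 : ℝ) 1, Ψpair (γ t) = 0 := by
  set τ := Equiv.swap i j with hτ
  -- value of φ on the transposed configuration
  have hphi : ∀ m : Fin N, φ m (r ∘ ⇑τ) = φ (τ m) r := by
    intro m
    have := hequiv τ r (τ m)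
    rwa [show τ (τ m) = m from Equiv.swap_apply_self i j m,
      show τ⁻¹ = τ from Equiv.swap_inv i j] at this
  -- antisymmetry of Ψpair
  have hanti : Ψpair (r ∘ ⇑τ) = - Ψpair r := by
    rw [hΨ, hΨ]
    calc (∏ p ∈ univ.filter (fun p : Fin N × Fin N => p.1 < p.2),
            (φ p.1 (r ∘ ⇑τ) - φ p.2 (r ∘ ⇑τ)))
        = ∏ p ∈ univ.filter (fun p : Fin N × Fin N => p.1 < p.2),
            ((fun k => φ k r) (τ p.1) - (fun k => φ k r) (τ p.2)) := by
          exact Finset.prod_congr rfl (fun p _ => by rw [hphi, hphi])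
      _ = - ∏ p ∈ univ.filter (fun p : Fin N × Fin N => p.1 < p.2),
            (φ p.1 r - φ p.2 r) := swap_prod (fun k => φ k r) i j hij
  -- Ψpair is continuous
  have hΨcont : Continuous Ψpair := by
    have : Ψpair = fun s => ∏ p ∈ univ.filter (fun p : Fin N × Fin N => p.1 < p.2),
        (φ p.1 s - φ p.2 s) := funext hΨ
    rw [this]
    exact continuous_finset_prod _ (fun p _ => (hcont p.1).sub (hcont p.2))
  have hgcont : ContinuousOn (fun t => Ψpair (γ t)) (Set.Icc 0 1) :=
    hΨcont.comp_continuousOn hγ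
  have hg0 : Ψpair (γ 0) = Ψpair r := by rw [h0]
  have hg1 : Ψpair (γ 1) = - Ψpair r := by rw [h1, hanti]
  have huIcc : Set.uIcc (0 : ℝ) 1 = Set.Icc 0 1 := Set.uIcc_of_le zero_le_one
  have hmem : (0 : ℝ) ∈ Set.uIcc (Ψpair (γ 0)) (Ψpair (γ 1)) := by
    rw [hg0, hg1]
    rcases lt_or_gt_of_ne hr with h | h
    · exact Set.mem_uIcc.2 (Or.inl ⟨le_of_lt h, by linarith⟩)
    · exact Set.mem_uIcc.2 (Or.inr ⟨by linarith, le_of_lt h⟩)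
  have := intermediate_value_uIcc (f := fun t => Ψpair (γ t)) (a := (0:ℝ)) (b := 1)
    (by rwa [huIcc]) hmem
  obtain ⟨t, ht, htz⟩ := this
  rw [huIcc] at ht
  have ht0 : t ≠ 0 := by
    intro he; subst he; exact hr (hg0 ▸ htz)
  have ht1 : t ≠ 1 := by
    intro he; subst he
    have h1z : Ψpair (γ 1) = 0 := htz
    rw [hg1] at h1z; exact hr (by linarith)
  exact ⟨t, ⟨ht.1.lt_of_ne (Ne.symm ht0), ht.2.lt_of_ne ht1⟩, htz⟩
end

section
/- Under the hypotheses of the previous setup (φ continuous and equivariant), any two configurations r and r ∘ ρ, where ρ is a non-identity permutation, lie in different connected components of the set {r : Ψ_pair(r) ≠ 0} whenever Ψ_pair(r) ≠ 0. -/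
open Finset

/-- For a continuous, equivariant `φ`, a configuration `r` with `Ψ_pair r ≠ 0` and
its image under any non-identity permutation lie in different connected components
of the set `{s | Ψ_pair s ≠ 0}`. -/
theorem permuted_config_different_nodal_domain {N : ℕ} {E : Type*}
    [TopologicalSpace E]
    (φ : Fin N → (Fin N → E) → ℝ)
    (hcont : ∀ i, Continuous (φ i))
    (hequiv : ∀ (ρ : Equiv.Perm (Fin N)) (r : Fin N → E) (i : Fin N),
      φ (ρ i) (r ∘ ⇑ρ⁻¹) = φ i r)
    (Ψpair : (Fin N → E) → ℝ)
    (hΨ : ∀ r, Ψpair r = ∏ p ∈ univ.filter (fun p : Fin N × Fin N => p.1 < p.2),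
      (φ p.1 r - φ p.2 r))
    (r : Fin N → E) (hr : Ψpair r ≠ 0)
    (ρ : Equiv.Perm (Fin N)) (hρ : ρ ≠ 1) :
    connectedComponentIn {s : Fin N → E | Ψpair s ≠ 0} r ≠
      connectedComponentIn {s : Fin N → E | Ψpair s ≠ 0} (r ∘ ⇑ρ) := by
  intro hEq
  set S : Set (Fin N → E) := {s : Fin N → E | Ψpair s ≠ 0} with hSdef
  -- at any point of S, all the φ i are pairwise distinct
  have hne : ∀ s, Ψpair s ≠ 0 → ∀ i j : Fin N, i ≠ j → φ i s ≠ φ j s := by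
    intro s hs i j hij
    rw [hΨ s, Finset.prod_ne_zero_iff] at hs
    rcases lt_or_gt_of_ne hij with h | h
    · have := hs (i, j) (by simp [h])
      exact sub_ne_zero.mp this
    · have := hs (j, i) (by simp [h])
      exact (sub_ne_zero.mp this).symm
  have hinj : Function.Injective (fun i => φ i r) := by
    intro i j h
    by_contra hij
    exact hne r hr i j hij h
  -- equivariance in the convenient form
  have hcmp : ∀ j : Fin N, φ j (r ∘ ⇑ρ) = φ (ρ j) r := by
    intro j
    have h := hequiv ρ⁻¹ r (ρ j)
    simpa using h
  -- r ∘ ρ is also in S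
  have hrρ : Ψpair (r ∘ ⇑ρ) ≠ 0 := by
    rw [hΨ, Finset.prod_ne_zero_iff]
    intro p hp
    simp only [mem_filter, mem_univ, true_and] at hp
    rw [hcmp, hcmp, sub_ne_zero]
    intro h
    exact absurd (ρ.injective (hinj h)) (ne_of_lt hp)
  have hrS : r ∈ S := hr
  have hC : IsConnected (connectedComponentIn S r) :=
    (isConnected_connectedComponentIn_iff).mpr hrS
  have hmem1 : r ∈ connectedComponentIn S r := mem_connectedComponentIn hrS
  have hmem2 : (r ∘ ⇑ρ) ∈ connectedComponentIn S r := by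
    rw [hEq]; exact mem_connectedComponentIn hrρ
  have hsub : connectedComponentIn S r ⊆ S := connectedComponentIn_subset S r
  -- sign preservation along the connected component
  have hkey : ∀ i j : Fin N, φ i r < φ j r → φ (ρ i) r < φ (ρ j) r := by
    intro i j hij
    by_contra hle
    have hijne : i ≠ j := fun h => lt_irrefl _ (h ▸ hij)
    have h2 : φ (ρ j) r < φ (ρ i) r := by
      rcases lt_or_eq_of_le (not_lt.mp hle) with h | h
      · exact h
      · exact absurd (hinj h) fun hh => hijne (ρ.injective hh.symm)
    set f : (Fin N → E) → ℝ := fun s => φ j s - φ i s with hfdef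
    have hfc : Continuous f := (hcont j).sub (hcont i)
    have hfr : 0 < f r := sub_pos.mpr hij
    have hfrρ : f (r ∘ ⇑ρ) < 0 := by
      simp only [hfdef, hcmp]
      linarith
    have h0 : (0 : ℝ) ∈ Set.Icc (f (r ∘ ⇑ρ)) (f r) := ⟨le_of_lt hfrρ, le_of_lt hfr⟩
    have him := hC.isPreconnected.intermediate_value hmem2 hmem1 hfc.continuousOn h0
    obtain ⟨x, hx, hfx⟩ := him
    have hxS : x ∈ S := hsub hx
    exact hne x hxS j i hijne.symm (sub_eq_zero.mp hfx)
  -- ρ preserves the order of the (distinct) values φ i r, hence ρ = 1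
  set a : Fin N → ℝ := fun i => φ i r with hadef
  have hiff : ∀ i j : Fin N, a i < a j ↔ a (ρ i) < a (ρ j) := by
    intro i j
    constructor
    · exact hkey i j
    · intro h
      rcases lt_trichotomy (a i) (a j) with h' | h' | h'
      · exact h'
      · exact absurd (congrArg a (hinj h')) (by rw [hinj h'] at h; exact absurd h (lt_irrefl _))
      · exact absurd (hkey j i h') (not_lt.mpr (le_of_lt h))
  have hfix : ∀ i : Fin N, ρ i = i := by
    intro i
    have himg : (univ.filter fun j => a j < a i).image ρ
        = univ.filter fun k => a k < a (ρ i) := by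
      ext k
      simp only [mem_image, mem_filter, mem_univ, true_and]
      constructor
      · rintro ⟨j, hj, rfl⟩
        exact (hiff j i).mp hj
      · intro hk
        refine ⟨ρ⁻¹ k, ?_, by simp⟩
        have : a (ρ (ρ⁻¹ k)) < a (ρ i) := by simpa using hk
        exact (hiff (ρ⁻¹ k) i).mpr this
    have hcard := congrArg Finset.card himg
    rw [Finset.card_image_of_injective _ ρ.injective] at hcard
    by_contra hne'
    have hane : a (ρ i) ≠ a i := fun h => hne' (hinj h)
    rcases hane.lt_or_gt with h | h
    · have hss : (univ.filter fun k => a k < a (ρ i))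
          ⊂ univ.filter fun j => a j < a i := by
        refine (Finset.ssubset_iff_of_subset ?_).mpr ⟨ρ i, by simp [h], by simp⟩
        intro k hk
        simp only [mem_filter, mem_univ, true_and] at hk ⊢
        exact hk.trans h
      exact absurd hcard (ne_of_gt (Finset.card_lt_card hss))
    · have hss : (univ.filter fun j => a j < a i)
          ⊂ univ.filter fun k => a k < a (ρ i) := by
        refine (Finset.ssubset_iff_of_subset ?_).mpr ⟨i, by simp [h], by simp⟩
        intro k hk
        simp only [mem_filter, mem_univ, true_and] at hk ⊢
        exact hk.trans h
      exact absurd hcard (ne_of_lt (Finset.card_lt_card hss))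
  exact hρ (Equiv.ext hfix)
end

section
/- Let α : E → (Fin N → ℝ) be differentiable, and suppose at a point x the sorted values of α(x) have at least two coincident consecutive gaps (i.e. there exist two distinct indices k ≠ k' in the sorted order with α_{k+1}(x) = α_k(x) and α_{k'+1}(x) = α_{k'}(x)). Define f(y) = ∏_{i} (α_{σ(y)(i+1)}(y) − α_{σ(y)(i)}(y)) where σ(y) is a sorting permutation of α(y). Then f has derivative zero at x (the limit of (f(y) − f(x))/‖y − x‖ as y → x is 0). -/
/-!
Sorting is 1-Lipschitz for the sup norm: the `i + 1` smallest entries of `w` sit at indices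
where `v` is at most the `i`-th smallest entry of `w` plus `‖v - w‖`, so the `i`-th smallest
entry of `v` is at most that, and symmetrically. Hence each sorted gap of `α y` differs from the
one of `α x` by `O(‖y - x‖)`. In the gap product, one vanishing gap is then `O(‖y - x‖)` while
the product of the others tends to `0` thanks to the second vanishing gap, so the whole product
is `o(‖y - x‖)`.
-/

open Filter Asymptotics Topology Finset

theorem Fin.exists_le_le_perm_apply {n : ℕ} (π : Equiv.Perm (Fin n)) (i : Fin n) :
    ∃ p ≤ i, i ≤ π p := by
  by_contra! h
  have := card_le_card_of_injOn π (fun p hp => mem_Iio.mpr (h p (mem_Iic.mp hp)))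
    π.injective.injOn
  simp only [Fin.card_Iic, Fin.card_Iio] at this
  omega

section Sorting

variable {n : ℕ} {v w : Fin n → ℝ} {σ τ : Equiv.Perm (Fin n)}

theorem sorted_le_sorted_add_norm_sub (hv : Monotone (v ∘ σ)) (hw : Monotone (w ∘ τ))
    (i : Fin n) : v (σ i) ≤ w (τ i) + ‖v - w‖ := by
  obtain ⟨p, hpi, hip⟩ := Fin.exists_le_le_perm_apply (τ.trans σ.symm) i
  calc v (σ i) ≤ v (σ (σ.symm (τ p))) := hv hip
    _ = v (τ p) := by rw [Equiv.apply_symm_apply]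
    _ ≤ w (τ p) + ‖v - w‖ := by
      have := (le_abs_self _).trans (norm_le_pi_norm (v - w) (τ p))
      rw [Pi.sub_apply] at this
      linarith
    _ ≤ w (τ i) + ‖v - w‖ := by gcongr; exact hw hpi

theorem abs_sorted_sub_sorted_le (hv : Monotone (v ∘ σ)) (hw : Monotone (w ∘ τ))
    (i : Fin n) : |v (σ i) - w (τ i)| ≤ ‖v - w‖ := by
  have hvw := sorted_le_sorted_add_norm_sub hv hw i
  have hwv := sorted_le_sorted_add_norm_sub hw hv i
  rw [norm_sub_rev] at hwv
  exact abs_sub_le_iff.mpr ⟨by linarith, by linarith⟩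

end Sorting

def sortedGaps {n : ℕ} (v : Fin (n + 1) → ℝ) (σ : Equiv.Perm (Fin (n + 1))) :
    Fin n → ℝ :=
  fun i => v (σ i.succ) - v (σ i.castSucc)

theorem norm_sortedGaps_sub_le {n : ℕ} {v w : Fin (n + 1) → ℝ}
    {σ τ : Equiv.Perm (Fin (n + 1))}
    (hv : Monotone (v ∘ σ)) (hw : Monotone (w ∘ τ)) :
    ‖sortedGaps v σ - sortedGaps w τ‖ ≤ 2 * ‖v - w‖ := by
  refine (pi_norm_le_iff_of_nonneg (by positivity)).mpr fun i => ?_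
  have hsucc := abs_sorted_sub_sorted_le hv hw i.succ
  have hcast := abs_sorted_sub_sorted_le hv hw i.castSucc
  rw [Real.norm_eq_abs, Pi.sub_apply, sortedGaps, sortedGaps]
  calc |v (σ i.succ) - v (σ i.castSucc) - (w (τ i.succ) - w (τ i.castSucc))|
      = |(v (σ i.succ) - w (τ i.succ)) - (v (σ i.castSucc) - w (τ i.castSucc))| := by
        congr 1; ring
    _ ≤ |v (σ i.succ) - w (τ i.succ)| + |v (σ i.castSucc) - w (τ i.castSucc)| := abs_sub _ _
    _ ≤ 2 * ‖v - w‖ := by linarith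

theorem hasFDerivAt_prod_zero_of_two_zeros {𝕜 E ι : Type*} [NontriviallyNormedField 𝕜]
    [NormedAddCommGroup E] [NormedSpace 𝕜 E] [Fintype ι] {u : E → ι → 𝕜} {x : E}
    (hu : (fun y => u y - u x) =O[𝓝 x] fun y => y - x) {k k' : ι} (hkk' : k ≠ k')
    (hk : u x k = 0) (hk' : u x k' = 0) :
    HasFDerivAt (fun y => ∏ i, u y i) (0 : E →L[𝕜] 𝕜) x := by
  classical
  have hcont : Tendsto u (𝓝 x) (𝓝 (u x)) :=
    tendsto_sub_nhds_zero_iff.mp (hu.trans_tendsto (tendsto_sub_nhds_zero_iff.mpr tendsto_id))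
  have hfactor : (fun y => u y k) =O[𝓝 x] fun y => ‖y - x‖ := by
    refine (IsBigO.trans ?_ hu).norm_right
    refine IsBigO.of_bound 1 (Eventually.of_forall fun y => ?_)
    simpa [hk] using norm_le_pi_norm (u y - u x) k
  have hrest : Tendsto (fun y => ∏ i ∈ univ.erase k, u y i) (𝓝 x) (𝓝 0) := by
    rw [← prod_eq_zero (mem_erase.mpr ⟨hkk'.symm, mem_univ k'⟩) hk']
    exact tendsto_finsetProd _ fun i _ => (continuous_apply i).continuousAt.tendsto.comp hcont
  have hprod := hfactor.mul_isLittleO ((isLittleO_one_iff ℝ).mpr hrest)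
  refine HasFDerivAt.of_isLittleO (IsLittleO.of_norm_right ?_)
  simpa [hk, ← mul_prod_erase univ (u _) (mem_univ k)] using hprod

/-- If at a point `x` two distinct consecutive sorted gaps of `α(x)` vanish
simultaneously, then the product of consecutive sorted gaps has derivative zero
at `x`. -/
theorem gap_product_deriv_zero_at_double_collision
    {E : Type*} [NormedAddCommGroup E] [NormedSpace ℝ E] {N : ℕ}
    (α : E → Fin (N + 1) → ℝ) (hα : Differentiable ℝ α)
    (σ : E → Equiv.Perm (Fin (N + 1)))
    (hσ : ∀ y, Monotone (α y ∘ σ y))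
    (f : E → ℝ)
    (hf : ∀ y, f y = ∏ i : Fin N, (α y (σ y i.succ) - α y (σ y i.castSucc)))
    (x : E) (k k' : Fin N) (hkk' : k ≠ k')
    (hk : α x (σ x k.succ) - α x (σ x k.castSucc) = 0)
    (hk' : α x (σ x k'.succ) - α x (σ x k'.castSucc) = 0) :
    HasFDerivAt f (0 : E →L[ℝ] ℝ) x := by
  have hgaps : (fun y => sortedGaps (α y) (σ y) - sortedGaps (α x) (σ x)) =O[𝓝 x]
      fun y => y - x :=
    (IsBigO.of_bound 2 (Eventually.of_forall fun y => norm_sortedGaps_sub_le (hσ y) (hσ x))).trans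
      (hα x).hasFDerivAt.isBigO_sub
  rw [show f = fun y => ∏ i, sortedGaps (α y) (σ y) i from funext hf]
  exact hasFDerivAt_prod_zero_of_two_zeros hgaps hkk' hk hk'
end

section
/- Let α : E → (Fin N → ℝ) be continuous and define f(y) = ∏_{i=0}^{N−2} (sorted(α(y))(i+1) − sorted(α(y))(i)) and s(y) = sign of the sorting permutation when α(y) is injective. Then the function Ψ(y) = s(y) · f(y) (defined to be 0 when α(y) is not injective) is continuous on E. -/
/-!
Near a tuple with distinct entries the sorting permutation is locally constant, so `Ψ` is locally
a fixed sign times a product of differences of coordinates. Near a collision `x a = x b` one of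
the sorted gaps is at most `|x a - x b|` and the others are at most `2‖x‖`, which squeezes `Ψ`
to `0`.
-/

open Filter Topology Equiv

namespace Sortlet

variable {n : ℕ}

noncomputable def gapProd (x : Fin (n + 1) → ℝ) (σ : Perm (Fin (n + 1))) : ℝ :=
  ∏ i : Fin n, ((x ∘ σ) i.succ - (x ∘ σ) i.castSucc)

noncomputable def sortlet (x : Fin (n + 1) → ℝ) : ℝ :=
  if Function.Injective x then ((Perm.sign (Tuple.sort x) : ℤ) : ℝ) * gapProd x (Tuple.sort x)
  else 0

lemma continuous_gapProd (σ : Perm (Fin (n + 1))) : Continuous fun x => gapProd x σ := by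
  unfold gapProd
  fun_prop

lemma sort_eq_of_strictMono {x : Fin (n + 1) → ℝ} {σ : Perm (Fin (n + 1))}
    (h : StrictMono (x ∘ σ)) : Tuple.sort x = σ :=
  (Tuple.eq_sort_iff.mpr ⟨h.monotone, fun _ _ hij hx => absurd hx (h hij).ne⟩).symm

lemma sortlet_eq_of_strictMono {x : Fin (n + 1) → ℝ} {σ : Perm (Fin (n + 1))}
    (h : StrictMono (x ∘ σ)) : sortlet x = ((Perm.sign σ : ℤ) : ℝ) * gapProd x σ := by
  have hinj : Function.Injective x := by
    simpa using h.injective.comp σ.symm.injective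
  rw [sortlet, if_pos hinj, sort_eq_of_strictMono h]

lemma isOpen_setOf_strictMono_comp (σ : Perm (Fin (n + 1))) :
    IsOpen {x : Fin (n + 1) → ℝ | StrictMono (x ∘ σ)} := by
  simp only [Fin.strictMono_iff_lt_succ, Set.ofPred_forall]
  exact isOpen_iInter_of_finite fun i => isOpen_lt (continuous_apply _) (continuous_apply _)

lemma exists_gap_le_of_lt {g : Fin (n + 1) → ℝ} (hg : Monotone g) {p q : Fin (n + 1)}
    (hpq : p < q) : ∃ i : Fin n, g i.succ - g i.castSucc ≤ g q - g p := by
  set i := p.castPred (Fin.ne_last_of_lt hpq)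
  have hp : i.castSucc = p := Fin.castSucc_castPred p _
  have hq : i.succ ≤ q := Fin.castSucc_lt_iff_succ_le.mp (hp ▸ hpq)
  exact ⟨i, by rw [hp]; linarith [hg hq]⟩

lemma exists_sorted_gap_le (x : Fin (n + 1) → ℝ) {a b : Fin (n + 1)} (hab : a ≠ b) :
    ∃ i : Fin n, (x ∘ Tuple.sort x) i.succ - (x ∘ Tuple.sort x) i.castSucc ≤ |x a - x b| := by
  wlog h : (Tuple.sort x).symm b < (Tuple.sort x).symm a generalizing a b
  · have h' : (Tuple.sort x).symm a < (Tuple.sort x).symm b :=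
      (not_lt.mp h).lt_of_ne ((Tuple.sort x).symm.injective.ne hab)
    simpa only [abs_sub_comm] using this hab.symm h'
  obtain ⟨i, hi⟩ := exists_gap_le_of_lt (Tuple.monotone_sort x) h
  exact ⟨i, by simpa using hi.trans (le_abs_self _)⟩

lemma sorted_gap_nonneg (x : Fin (n + 1) → ℝ) (i : Fin n) :
    0 ≤ (x ∘ Tuple.sort x) i.succ - (x ∘ Tuple.sort x) i.castSucc :=
  sub_nonneg.mpr (Tuple.monotone_sort x (Fin.castSucc_le_succ i))

lemma gap_le_two_mul_norm (x : Fin (n + 1) → ℝ) (σ : Perm (Fin (n + 1))) (i : Fin n) :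
    (x ∘ σ) i.succ - (x ∘ σ) i.castSucc ≤ 2 * ‖x‖ := by
  have hle : ∀ k, |x k| ≤ ‖x‖ := fun k => by simpa using norm_le_pi_norm x k
  have h₁ := abs_le.mp (hle (σ i.succ))
  have h₂ := abs_le.mp (hle (σ i.castSucc))
  simp only [Function.comp_apply]
  linarith

lemma abs_sortlet_le (x : Fin (n + 1) → ℝ) {a b : Fin (n + 1)} (hab : a ≠ b) :
    |sortlet x| ≤ |x a - x b| * (2 * ‖x‖) ^ (n - 1) := by
  by_cases hinj : Function.Injective x
  · obtain ⟨i, hi⟩ := exists_sorted_gap_le x hab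
    have hrest : ∏ j ∈ Finset.univ.erase i,
        ((x ∘ Tuple.sort x) j.succ - (x ∘ Tuple.sort x) j.castSucc) ≤ (2 * ‖x‖) ^ (n - 1) := by
      calc _ ≤ ∏ _j ∈ Finset.univ.erase i, 2 * ‖x‖ :=
            Finset.prod_le_prod (fun j _ => sorted_gap_nonneg x j)
              (fun j _ => gap_le_two_mul_norm x _ j)
        _ = (2 * ‖x‖) ^ (n - 1) := by simp [Finset.card_erase_of_mem]
    rw [sortlet, if_pos hinj, abs_mul, abs_unit_intCast, one_mul, gapProd,
      ← Finset.mul_prod_erase _ _ (Finset.mem_univ i)]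
    have hrest_nonneg := Finset.prod_nonneg fun j (_ : j ∈ Finset.univ.erase i) =>
      sorted_gap_nonneg x j
    rw [abs_of_nonneg (mul_nonneg (sorted_gap_nonneg x i) hrest_nonneg)]
    exact mul_le_mul hi hrest hrest_nonneg (abs_nonneg _)
  · rw [sortlet, if_neg hinj, abs_zero]
    positivity

lemma continuousAt_sortlet_of_injective {x : Fin (n + 1) → ℝ} (hx : Function.Injective x) :
    ContinuousAt sortlet x := by
  set σ := Tuple.sort x
  have hσ : StrictMono (x ∘ σ) :=
    (Tuple.monotone_sort x).strictMono_of_injective (hx.comp σ.injective)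
  have hloc : (fun x' => ((Perm.sign σ : ℤ) : ℝ) * gapProd x' σ) =ᶠ[𝓝 x] sortlet :=
    eventually_of_mem ((isOpen_setOf_strictMono_comp σ).mem_nhds hσ)
      fun x' hx' => (sortlet_eq_of_strictMono hx').symm
  exact ((continuous_const.mul (continuous_gapProd σ)).continuousAt).congr hloc

lemma continuousAt_sortlet_of_not_injective {x : Fin (n + 1) → ℝ}
    (hx : ¬Function.Injective x) : ContinuousAt sortlet x := by
  obtain ⟨a, b, hxab, hab⟩ : ∃ a b, x a = x b ∧ a ≠ b := by
    simpa [Function.Injective] using hx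
  have hbound : Tendsto (fun x' : Fin (n + 1) → ℝ => |x' a - x' b| * (2 * ‖x'‖) ^ (n - 1))
      (𝓝 x) (𝓝 0) := by
    have hc : Continuous fun x' : Fin (n + 1) → ℝ => |x' a - x' b| * (2 * ‖x'‖) ^ (n - 1) := by
      fun_prop
    simpa [hxab] using hc.tendsto x
  have hx0 : sortlet x = 0 := if_neg hx
  rw [ContinuousAt, hx0]
  exact squeeze_zero_norm (fun x' => (Real.norm_eq_abs _).trans_le (abs_sortlet_le x' hab)) hbound

lemma continuous_sortlet : Continuous (sortlet : (Fin (n + 1) → ℝ) → ℝ) :=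
  continuous_iff_continuousAt.mpr fun x =>
    if hx : Function.Injective x then continuousAt_sortlet_of_injective hx
    else continuousAt_sortlet_of_not_injective hx

end Sortlet

open Sortlet in
/-- The sortlet `Ψ(y) = sign(sorting permutation) · (product of consecutive sorted
gaps of α(y))`, extended by `0` at points where `α(y)` has a collision, is
continuous. -/
theorem sortlet_continuous {E : Type*} [TopologicalSpace E] {N : ℕ}
    (α : E → Fin (N + 1) → ℝ) (hα : Continuous α)
    (Ψ : E → ℝ)
    (hΨ : ∀ y, Ψ y =
      if Function.Injective (α y) then
        ((Equiv.Perm.sign (Tuple.sort (α y)) : ℤ) : ℝ) *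
          ∏ i : Fin N, ((α y ∘ Tuple.sort (α y)) i.succ -
            (α y ∘ Tuple.sort (α y)) i.castSucc)
      else 0) :
    Continuous Ψ := by
  have hΨ_eq : Ψ = sortlet ∘ α := funext hΨ
  exact hΨ_eq ▸ continuous_sortlet.comp hα
end

section
/- Let p be a probability density on a finite type (or a probability mass function) depending smoothly on a parameter, written p_θ(x) = Ψ_θ(x)² / (∑_y Ψ_θ(y)²) with Ψ_θ(x) ≠ 0 for all x, and let E_loc(x) = (HΨ_θ)(x)/Ψ_θ(x) for a symmetric matrix H. Then the derivative of the energy E(θ) = ⟨Ψ_θ, HΨ_θ⟩/⟨Ψ_θ, Ψ_θ⟩ equals 2·( E_{p_θ}[E_loc · ∂_θ log Ψ_θ] − E_{p_θ}[E_loc] · E_{p_θ}[∂_θ log Ψ_θ] ). -/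
open Matrix

/-- The REINFORCE-style gradient of the variational energy:
`E'(θ) = 2 (E_p[E_loc ∂log Ψ] − E_p[E_loc]·E_p[∂log Ψ])` where
`p_θ(x) = Ψ_θ(x)²/∑_y Ψ_θ(y)²` and `E_loc = (HΨ_θ)/Ψ_θ`. -/
theorem energy_gradient_reinforce {n : ℕ} (H : Matrix (Fin n) (Fin n) ℝ)
    (hH : H.IsSymm) (Ψ : ℝ → Fin n → ℝ) (θ₀ : ℝ) (dΨ : Fin n → ℝ)
    (hΨ : ∀ x, HasDerivAt (fun θ => Ψ θ x) (dΨ x) θ₀)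
    (hΨ0 : ∀ θ x, Ψ θ x ≠ 0)
    (Eloc : ℝ → Fin n → ℝ)
    (hEloc : ∀ θ x, Eloc θ x = H.mulVec (Ψ θ) x / Ψ θ x)
    (p : ℝ → Fin n → ℝ)
    (hp : ∀ θ x, p θ x = Ψ θ x ^ 2 / ∑ y, Ψ θ y ^ 2)
    (Energy : ℝ → ℝ)
    (hE : ∀ θ, Energy θ = (Ψ θ ⬝ᵥ H.mulVec (Ψ θ)) / (Ψ θ ⬝ᵥ Ψ θ)) :
    HasDerivAt Energy
      (2 * ((∑ x, p θ₀ x * (Eloc θ₀ x * (dΨ x / Ψ θ₀ x))) -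
        (∑ x, p θ₀ x * Eloc θ₀ x) * (∑ x, p θ₀ x * (dΨ x / Ψ θ₀ x)))) θ₀ := by
  classical
  rcases Nat.eq_zero_or_pos n with h0 | hn
  · subst h0
    have hE0 : Energy = fun _ => 0 := funext fun θ => by
      rw [hE]; simp [dotProduct]
    rw [hE0]
    simpa using hasDerivAt_const θ₀ (0 : ℝ)
  · have hne : Nonempty (Fin n) := Fin.pos_iff_nonempty.mp hn
    have hS : (0 : ℝ) < ∑ y, Ψ θ₀ y ^ 2 := by
      apply Finset.sum_pos
      · intro i _; have := hΨ0 θ₀ i; positivity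
      · exact Finset.univ_nonempty
    set S : ℝ := ∑ y, Ψ θ₀ y ^ 2 with hSdef
    have hDS : Ψ θ₀ ⬝ᵥ Ψ θ₀ = S := by
      simp [dotProduct, hSdef, sq]
    have hD0 : Ψ θ₀ ⬝ᵥ Ψ θ₀ ≠ 0 := by rw [hDS]; exact ne_of_gt hS
    -- derivative of each mulVec component
    have hMV : ∀ x, HasDerivAt (fun θ => H.mulVec (Ψ θ) x) (H.mulVec dΨ x) θ₀ := by
      intro x
      simp only [mulVec, dotProduct]
      exact HasDerivAt.fun_sum fun y _ => (hΨ y).const_mul (H x y)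
    -- derivative of denominator
    have hD : HasDerivAt (fun θ => Ψ θ ⬝ᵥ Ψ θ) (2 * (dΨ ⬝ᵥ Ψ θ₀)) θ₀ := by
      have h := HasDerivAt.fun_sum (fun x (_ : x ∈ Finset.univ) => (hΨ x).mul (hΨ x))
      simp only [dotProduct]
      convert h using 1
      case e'_4 => rfl
      case e'_5 => rfl
      case e'_8 => rfl
      simp only [dotProduct, Finset.mul_sum]
      exact Finset.sum_congr rfl fun x _ => by ring
    -- symmetry
    have hsym : dΨ ⬝ᵥ H.mulVec (Ψ θ₀) = Ψ θ₀ ⬝ᵥ H.mulVec dΨ := by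
      simp only [dotProduct, mulVec, Finset.mul_sum]
      rw [Finset.sum_comm]
      refine Finset.sum_congr rfl fun y _ => Finset.sum_congr rfl fun x _ => ?_
      rw [← hH.apply x y]
      ring
    -- derivative of numerator
    have hN : HasDerivAt (fun θ => Ψ θ ⬝ᵥ H.mulVec (Ψ θ)) (2 * (dΨ ⬝ᵥ H.mulVec (Ψ θ₀))) θ₀ := by
      have h := HasDerivAt.fun_sum (fun x (_ : x ∈ Finset.univ) => (hΨ x).mul (hMV x))
      simp only [dotProduct]
      convert h using 1
      case e'_4 => rfl
      case e'_5 => rfl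
      case e'_8 => rfl
      rw [Finset.sum_add_distrib]
      have h1 : ∑ x, dΨ x * H.mulVec (Ψ θ₀) x = dΨ ⬝ᵥ H.mulVec (Ψ θ₀) := rfl
      have h2 : ∑ x, Ψ θ₀ x * H.mulVec dΨ x = Ψ θ₀ ⬝ᵥ H.mulVec dΨ := rfl
      rw [h1, h2, ← hsym]
      ring
    have hdiv := hN.div hD hD0
    have hEfun : Energy = fun θ => (Ψ θ ⬝ᵥ H.mulVec (Ψ θ)) / (Ψ θ ⬝ᵥ Ψ θ) :=
      funext hE
    rw [hEfun]
    convert hdiv using 1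
    case e'_4 => rfl
    case e'_5 => rfl
    case e'_8 => rfl
    -- now algebra: rewrite sums
    have e1 : ∑ x, p θ₀ x * (Eloc θ₀ x * (dΨ x / Ψ θ₀ x))
        = (dΨ ⬝ᵥ H.mulVec (Ψ θ₀)) / S := by
      rw [show (dΨ ⬝ᵥ H.mulVec (Ψ θ₀)) = ∑ x, dΨ x * H.mulVec (Ψ θ₀) x from rfl,
        Finset.sum_div]
      refine Finset.sum_congr rfl fun x _ => ?_
      rw [hp, hEloc, ← hSdef]
      have := hΨ0 θ₀ x
      field_simp
    have e2 : ∑ x, p θ₀ x * Eloc θ₀ x = (Ψ θ₀ ⬝ᵥ H.mulVec (Ψ θ₀)) / S := by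
      rw [show (Ψ θ₀ ⬝ᵥ H.mulVec (Ψ θ₀)) = ∑ x, Ψ θ₀ x * H.mulVec (Ψ θ₀) x from rfl,
        Finset.sum_div]
      refine Finset.sum_congr rfl fun x _ => ?_
      rw [hp, hEloc, ← hSdef]
      have := hΨ0 θ₀ x
      field_simp
    have e3 : ∑ x, p θ₀ x * (dΨ x / Ψ θ₀ x) = (dΨ ⬝ᵥ Ψ θ₀) / S := by
      rw [show (dΨ ⬝ᵥ Ψ θ₀) = ∑ x, dΨ x * Ψ θ₀ x from rfl, Finset.sum_div]
      refine Finset.sum_congr rfl fun x _ => ?_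
      rw [hp, ← hSdef]
      have := hΨ0 θ₀ x
      field_simp
    rw [e1, e2, e3, hDS]
    have hS0 : S ≠ 0 := ne_of_gt hS
    field_simp
end
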